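/- arXiv:2207.14175 — 5 statements merged into one kernel-verified Lean document; each statement's English description precedes it below -/
import Mathlib

section
/- For the bi-Helmholtz kernel K(x) = (1/(4α²))(α+|x|)e^{-|x|/α} with α > 0, and for all x ≠ 0, the identity K(x)K'''(x) − 2α²K''(x)K'''(x) + (1/2)α⁴((K''')²)'(x) = 0 holds. -/
/-!
Since `((K''')²)' = 2 K''' K''''`, the left-hand side factors as `K''' · (K - 2α² K'' + α⁴ K'''')`,
and the second factor is the bi-Helmholtz operator `(1 - α² ∂²)²` applied to `K`. Near any `x ≠ 0`
the kernel has the form `(a + b y) e^{d y}` with `d = ∓1/α`, and `d` is a double root of the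
characteristic polynomial `(1 - α² λ²)²`, so the operator annihilates `K` there.
-/

/-- The bi-Helmholtz kernel `K(x) = (1/(4α²))(α+|x|)e^{-|x|/α}`. -/
noncomputable def biHelmholtzK (α : ℝ) (x : ℝ) : ℝ :=
  (1 / (4 * α ^ 2)) * (α + |x|) * Real.exp (-|x| / α)

open Filter Topology Real

theorem hasDerivAt_linear_mul_exp (a b d y : ℝ) :
    HasDerivAt (fun y => (a + b * y) * exp (d * y)) ((b + d * (a + b * y)) * exp (d * y)) y := by
  have hlin : HasDerivAt (fun y => a + b * y) b y := by
    simpa using ((hasDerivAt_id y).const_mul b).const_add a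
  have hexp : HasDerivAt (fun y => exp (d * y)) (exp (d * y) * d) y := by
    simpa using ((hasDerivAt_id y).const_mul d).exp
  exact (hlin.mul hexp).congr_deriv (by ring)

-- At `n = 0` the truncated `n - 1` is harmless: its coefficient `n` vanishes.
theorem iteratedDeriv_linear_mul_exp (a b d : ℝ) (n : ℕ) :
    iteratedDeriv n (fun y => (a + b * y) * exp (d * y))
      = fun y => (d ^ n * (a + b * y) + n * d ^ (n - 1) * b) * exp (d * y) := by
  induction n with
  | zero => simp
  | succ n ih =>
    funext y
    rw [iteratedDeriv_succ, ih]
    have h := hasDerivAt_linear_mul_exp (d ^ n * a + n * d ^ (n - 1) * b) (d ^ n * b) d y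
    convert h.deriv using 2
    · funext y; ring
    · rcases n with _ | n <;> push_cast [pow_succ, Nat.add_sub_cancel] <;> ring

theorem linear_mul_exp_sub_add_iteratedDeriv_four_eq_zero (a b d α y : ℝ)
    (hd : α ^ 2 * d ^ 2 = 1) :
    let f := fun y => (a + b * y) * exp (d * y)
    f y - 2 * α ^ 2 * iteratedDeriv 2 f y + α ^ 4 * iteratedDeriv 4 f y = 0 := by
  simp only [iteratedDeriv_linear_mul_exp]
  linear_combination exp (d * y) * ((a + b * y) * (α ^ 2 * d ^ 2 - 1) + 4 * α ^ 2 * d * b) * hd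

theorem mul_iteratedDeriv_three_add_deriv_sq (f : ℝ → ℝ) (α x : ℝ)
    (hf : DifferentiableAt ℝ (iteratedDeriv 3 f) x) :
    f x * iteratedDeriv 3 f x - 2 * α ^ 2 * iteratedDeriv 2 f x * iteratedDeriv 3 f x
      + (1 / 2) * α ^ 4 * deriv (fun y => (iteratedDeriv 3 f y) ^ 2) x
      = iteratedDeriv 3 f x
        * (f x - 2 * α ^ 2 * iteratedDeriv 2 f x + α ^ 4 * iteratedDeriv 4 f x) := by
  rw [deriv_fun_pow hf, ← iteratedDeriv_succ]
  push_cast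
  ring

theorem exists_eventually_abs_eq_mul {x : ℝ} (hx : x ≠ 0) :
    ∃ ε : ℝ, ε ^ 2 = 1 ∧ ∀ᶠ y in 𝓝 x, |y| = ε * y := by
  rcases hx.lt_or_gt with hneg | hpos
  · exact ⟨-1, by norm_num, (eventually_lt_nhds hneg).mono fun y hy => by simp [abs_of_neg hy]⟩
  · exact ⟨1, by norm_num, (eventually_gt_nhds hpos).mono fun y hy => by simp [abs_of_pos hy]⟩

theorem biHelmholtzK_eventuallyEq (α : ℝ) {ε x : ℝ} (habs : ∀ᶠ y in 𝓝 x, |y| = ε * y) :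
    biHelmholtzK α =ᶠ[𝓝 x]
      fun y => (α / (4 * α ^ 2) + ε / (4 * α ^ 2) * y) * exp (-ε / α * y) := by
  filter_upwards [habs] with y hy
  rw [biHelmholtzK, hy, neg_div, neg_div, neg_mul, mul_div_right_comm]
  ring

theorem differentiableAt_iteratedDeriv_biHelmholtzK (α : ℝ) {x : ℝ} (hx : x ≠ 0) (n : ℕ) :
    DifferentiableAt ℝ (iteratedDeriv n (biHelmholtzK α)) x := by
  obtain ⟨ε, -, habs⟩ := exists_eventually_abs_eq_mul hx
  refine DifferentiableAt.congr_of_eventuallyEq ?_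
    ((biHelmholtzK_eventuallyEq α habs).iteratedDeriv n)
  rw [iteratedDeriv_linear_mul_exp]
  fun_prop

theorem biHelmholtzK_sub_add_iteratedDeriv_four_eq_zero {α x : ℝ} (hα : α ≠ 0) (hx : x ≠ 0) :
    biHelmholtzK α x - 2 * α ^ 2 * iteratedDeriv 2 (biHelmholtzK α) x
      + α ^ 4 * iteratedDeriv 4 (biHelmholtzK α) x = 0 := by
  obtain ⟨ε, hε, habs⟩ := exists_eventually_abs_eq_mul hx
  have hKG := biHelmholtzK_eventuallyEq α habs
  rw [hKG.eq_of_nhds, (hKG.iteratedDeriv 2).eq_of_nhds, (hKG.iteratedDeriv 4).eq_of_nhds]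
  refine linear_mul_exp_sub_add_iteratedDeriv_four_eq_zero _ _ _ _ _ ?_
  field_simp
  linear_combination hε

/-- For `x ≠ 0`, `K(x)K'''(x) − 2α²K''(x)K'''(x) + (1/2)α⁴((K''')²)'(x) = 0`. -/
theorem stmt0 (α : ℝ) (hα : 0 < α) (x : ℝ) (hx : x ≠ 0) :
    biHelmholtzK α x * iteratedDeriv 3 (biHelmholtzK α) x
      - 2 * α ^ 2 * iteratedDeriv 2 (biHelmholtzK α) x * iteratedDeriv 3 (biHelmholtzK α) x
      + (1 / 2) * α ^ 4 * deriv (fun y => (iteratedDeriv 3 (biHelmholtzK α) y) ^ 2) x = 0 := by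
  rw [mul_iteratedDeriv_three_add_deriv_sq _ _ _
      (differentiableAt_iteratedDeriv_biHelmholtzK α hx 3),
    biHelmholtzK_sub_add_iteratedDeriv_four_eq_zero hα.ne' hx, mul_zero]
end

section
/- The kernel K satisfies the distributional identity (1 − α²∂ₓₓ)²K = δ₀; concretely, for every test function φ ∈ C_c^∞(ℝ), ∫ K(x)(φ(x) − 2α²φ''(x) + α⁴φ''''(x)) dx = φ(0). -/
open MeasureTheory Real Set Filter Topology

namespace BiHelmholtzAux

noncomputable def k0 (α s x : ℝ) : ℝ := (1/(4*α^2)) * (α + s*x) * Real.exp (-(s*x)/α)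
noncomputable def k1 (α s x : ℝ) : ℝ := (1/(4*α^2)) * (-x/α) * Real.exp (-(s*x)/α)
noncomputable def k2 (α s x : ℝ) : ℝ := (1/(4*α^2)) * (s*x/α^2 - 1/α) * Real.exp (-(s*x)/α)
noncomputable def k3 (α s x : ℝ) : ℝ := (1/(4*α^2)) * (2*s/α^2 - x/α^3) * Real.exp (-(s*x)/α)
noncomputable def k4 (α s x : ℝ) : ℝ := (1/(4*α^2)) * (-3/α^3 + s*x/α^4) * Real.exp (-(s*x)/α)

lemma hasDerivAt_exp_part (α s x : ℝ) (hα : α ≠ 0) :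
    HasDerivAt (fun x => Real.exp (-(s*x)/α)) ((-s/α) * Real.exp (-(s*x)/α)) x := by
  have h : HasDerivAt (fun x : ℝ => -(s*x)/α) (-s/α) x := by
    simpa using (((hasDerivAt_id x).const_mul s).neg.div_const α)
  simpa [mul_comm] using h.exp

lemma hd_k0 (α s x : ℝ) (hα : α ≠ 0) (hs : s * s = 1) :
    HasDerivAt (k0 α s) (k1 α s x) x := by
  have h1 : HasDerivAt (fun x : ℝ => (1/(4*α^2)) * (α + s*x)) ((1/(4*α^2)) * (s*1)) x :=
    (((hasDerivAt_id x).const_mul s).const_add α).const_mul _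
  have h := h1.mul (hasDerivAt_exp_part α s x hα)
  have heq : (1/(4*α^2)) * (s*1) * Real.exp (-(s*x)/α)
      + (1/(4*α^2)) * (α + s*x) * ((-s/α) * Real.exp (-(s*x)/α)) = k1 α s x := by
    unfold k1
    rcases mul_self_eq_one_iff.mp hs with h | h <;> subst h <;> (field_simp; ring)
  exact heq ▸ h

lemma hd_k1 (α s x : ℝ) (hα : α ≠ 0) (hs : s * s = 1) :
    HasDerivAt (k1 α s) (k2 α s x) x := by
  have h1 : HasDerivAt (fun x : ℝ => (1/(4*α^2)) * (-x/α)) ((1/(4*α^2)) * (-1/α)) x := by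
    have : HasDerivAt (fun x : ℝ => -x/α) (-1/α) x := by
      simpa using ((hasDerivAt_id x).neg.div_const α)
    exact this.const_mul _
  have h := h1.mul (hasDerivAt_exp_part α s x hα)
  have heq : (1/(4*α^2)) * (-1/α) * Real.exp (-(s*x)/α)
      + (1/(4*α^2)) * (-x/α) * ((-s/α) * Real.exp (-(s*x)/α)) = k2 α s x := by
    unfold k2
    rcases mul_self_eq_one_iff.mp hs with h | h <;> subst h <;> (field_simp; ring)
  exact heq ▸ h

lemma hd_k2 (α s x : ℝ) (hα : α ≠ 0) (hs : s * s = 1) :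
    HasDerivAt (k2 α s) (k3 α s x) x := by
  have h1 : HasDerivAt (fun x : ℝ => (1/(4*α^2)) * (s*x/α^2 - 1/α)) ((1/(4*α^2)) * (s/α^2)) x := by
    have : HasDerivAt (fun x : ℝ => s*x/α^2 - 1/α) (s/α^2) x := by
      simpa using (((hasDerivAt_id x).const_mul s).div_const (α^2)).sub_const (1/α)
    exact this.const_mul _
  have h := h1.mul (hasDerivAt_exp_part α s x hα)
  have heq : (1/(4*α^2)) * (s/α^2) * Real.exp (-(s*x)/α)
      + (1/(4*α^2)) * (s*x/α^2 - 1/α) * ((-s/α) * Real.exp (-(s*x)/α)) = k3 α s x := by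
    unfold k3
    rcases mul_self_eq_one_iff.mp hs with h | h <;> subst h <;> (field_simp; ring)
  exact heq ▸ h

lemma hd_k3 (α s x : ℝ) (hα : α ≠ 0) (hs : s * s = 1) :
    HasDerivAt (k3 α s) (k4 α s x) x := by
  have h1 : HasDerivAt (fun x : ℝ => (1/(4*α^2)) * (2*s/α^2 - x/α^3)) ((1/(4*α^2)) * (-1/α^3)) x := by
    have : HasDerivAt (fun x : ℝ => 2*s/α^2 - x/α^3) (-1/α^3) x := by
      simpa [neg_div, one_div] using ((hasDerivAt_id x).div_const (α^3)).const_sub (2*s/α^2)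
    exact this.const_mul _
  have h := h1.mul (hasDerivAt_exp_part α s x hα)
  have heq : (1/(4*α^2)) * (-1/α^3) * Real.exp (-(s*x)/α)
      + (1/(4*α^2)) * (2*s/α^2 - x/α^3) * ((-s/α) * Real.exp (-(s*x)/α)) = k4 α s x := by
    unfold k4
    rcases mul_self_eq_one_iff.mp hs with h | h <;> subst h <;> (field_simp; ring)
  exact heq ▸ h

lemma cont_k0 (α s : ℝ) (hα : α ≠ 0) : Continuous (k0 α s) := by
  unfold k0
  exact (continuous_const.mul (continuous_const.add (continuous_const.mul continuous_id))).mul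
    (((continuous_const.mul continuous_id).neg.div_const α).rexp)

end BiHelmholtzAux

open BiHelmholtzAux in
/-- Distributional identity `(1 − α²∂ₓₓ)²K = δ₀`: for every test function
`φ ∈ C_c^∞(ℝ)`, `∫ K(x)(φ(x) − 2α²φ''(x) + α⁴φ''''(x)) dx = φ(0)`. -/
theorem stmt5 (α : ℝ) (hα : 0 < α) (φ : ℝ → ℝ)
    (hφ : ContDiff ℝ (⊤ : ℕ∞) φ) (hφc : HasCompactSupport φ) :
    ∫ x : ℝ, biHelmholtzK α x *
        (φ x - 2 * α ^ 2 * iteratedDeriv 2 φ x + α ^ 4 * iteratedDeriv 4 φ x) = φ 0 := by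
  have hα0 : α ≠ 0 := ne_of_gt hα
  -- φ derivatives
  have hpd : ∀ (n : ℕ) (x : ℝ),
      HasDerivAt (iteratedDeriv n φ) (iteratedDeriv (n+1) φ x) x := by
    intro n x
    have h := (hφ.differentiable_iteratedDeriv n (by exact_mod_cast ENat.coe_lt_top n)) x
    rw [iteratedDeriv_succ]
    exact h.hasDerivAt.deriv ▸ h.hasDerivAt
  have hpc : ∀ n : ℕ, HasCompactSupport (iteratedDeriv n φ) := by
    intro n
    induction n with
    | zero => simpa [iteratedDeriv_zero] using hφc
    | succ n ih => rw [iteratedDeriv_succ]; exact ih.deriv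
  have hpcont : ∀ n : ℕ, Continuous (iteratedDeriv n φ) :=
    fun n => (hφ.differentiable_iteratedDeriv n (by exact_mod_cast ENat.coe_lt_top n)).continuous
  set p : ℕ → ℝ → ℝ := fun n => iteratedDeriv n φ with hp
  -- the boundary function G
  set G : ℝ → ℝ → ℝ := fun s x =>
    -2*α^2 * (k0 α s x * p 1 x - k1 α s x * p 0 x)
      + α^4 * (k0 α s x * p 3 x - k1 α s x * p 2 x + k2 α s x * p 1 x - k3 α s x * p 0 x)
    with hG
  have hGd : ∀ s : ℝ, s * s = 1 → ∀ x : ℝ,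
      HasDerivAt (G s) (k0 α s x * (p 0 x - 2*α^2 * p 2 x + α^4 * p 4 x)) x := by
    intro s hs x
    have h0 := hd_k0 α s x hα0 hs
    have h1 := hd_k1 α s x hα0 hs
    have h2 := hd_k2 α s x hα0 hs
    have h3 := hd_k3 α s x hα0 hs
    have hd := ((((h0.mul (hpd 1 x)).sub (h1.mul (hpd 0 x))).const_mul (-2*α^2)).add
        (((((h0.mul (hpd 3 x)).sub (h1.mul (hpd 2 x))).add
          (h2.mul (hpd 1 x))).sub (h3.mul (hpd 0 x))).const_mul (α^4)))
    have hker : k0 α s x - 2*α^2 * k2 α s x + α^4 * k4 α s x = 0 := by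
      unfold k0 k2 k4; field_simp; ring
    refine HasDerivAt.congr_deriv hd ?_
    symm
    have e1 : (1:ℕ) + 1 = 2 := rfl
    have e2 : (2:ℕ) + 1 = 3 := rfl
    have e3 : (3:ℕ) + 1 = 4 := rfl
    have e0 : (0:ℕ) + 1 = 1 := rfl
    rw [hp]
    simp only [e0, e1, e2, e3]
    linear_combination (iteratedDeriv 0 φ x) * hker
  -- compact support and continuity of G
  have hsub : ∀ {f g : ℝ → ℝ}, HasCompactSupport f → HasCompactSupport g →
      HasCompactSupport (fun x => f x - g x) := by
    intro f g hf hg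
    rw [show (fun x => f x - g x) = f + -g from by funext x; simp [sub_eq_add_neg]]
    exact hf.add hg.neg
  have hmul : ∀ (f : ℝ → ℝ) (n : ℕ), HasCompactSupport (fun x => f x * p n x) :=
    fun f n => (hpc n).mul_left
  have hGc : ∀ s : ℝ, HasCompactSupport (G s) := by
    intro s
    have h1 : HasCompactSupport
        (fun x => k0 α s x * p 1 x - k1 α s x * p 0 x) := hsub (hmul _ 1) (hmul _ 0)
    have h2 : HasCompactSupport
        (fun x => k0 α s x * p 3 x - k1 α s x * p 2 x + k2 α s x * p 1 x - k3 α s x * p 0 x) :=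
      hsub ((hsub (hmul _ 3) (hmul _ 2)).add (hmul _ 1)) (hmul _ 0)
    exact (h1.mul_left (f := fun _ => -2*α^2)).add (h2.mul_left (f := fun _ => α^4))
  -- the integrand
  set ψ : ℝ → ℝ := fun x => p 0 x - 2*α^2 * p 2 x + α^4 * p 4 x with hψ
  have hψcont : Continuous ψ := by
    exact ((hpcont 0).sub (continuous_const.mul (hpcont 2))).add
      (continuous_const.mul (hpcont 4))
  have hψc : HasCompactSupport ψ :=
    (hsub (hpc 0) (hmul (fun _ => 2*α^2) 2)).add (hmul (fun _ => α^4) 4)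
  have hbc : Continuous (biHelmholtzK α) := by
    unfold biHelmholtzK
    exact (continuous_const.mul (continuous_const.add continuous_abs)).mul
      ((continuous_abs.neg.div_const α).rexp)
  have hint : Integrable (fun x => biHelmholtzK α x * ψ x) := by
    exact (hbc.mul hψcont).integrable_of_hasCompactSupport (hψc.mul_left)
  have hintErw : (fun x => biHelmholtzK α x * ψ x)
      = fun x => biHelmholtzK α x *
        (φ x - 2 * α ^ 2 * iteratedDeriv 2 φ x + α ^ 4 * iteratedDeriv 4 φ x) := by
    funext x
    rw [hψ, hp]
    simp [iteratedDeriv_zero]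
  -- integrability of the s-versions
  have hintS : ∀ s : ℝ, Integrable (fun x => k0 α s x * ψ x) := by
    intro s
    exact ((cont_k0 α s hα0).mul hψcont).integrable_of_hasCompactSupport (hψc.mul_left)
  -- right half
  have hIoi : ∫ x in Ioi (0:ℝ), biHelmholtzK α x * ψ x = 0 - G 1 0 := by
    rw [setIntegral_congr_fun measurableSet_Ioi
      (g := fun x => k0 α 1 x * ψ x) (by
        intro x hx
        simp only [biHelmholtzK, k0, abs_of_pos (mem_Ioi.mp hx), one_mul]
        try ring)]
    exact integral_Ioi_of_hasDerivAt_of_tendsto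
      (((hGd 1 (by norm_num) 0).continuousAt).continuousWithinAt)
      (fun x _ => hGd 1 (by norm_num) x)
      ((hintS 1).integrableOn)
      ((hGc 1).is_zero_at_infty.mono_left _root_.atTop_le_cocompact)
  -- left half
  have hIic : ∫ x in Iic (0:ℝ), biHelmholtzK α x * ψ x = G (-1) 0 - 0 := by
    rw [setIntegral_congr_fun measurableSet_Iic
      (g := fun x => k0 α (-1) x * ψ x) (by
        intro x hx
        simp only [biHelmholtzK, k0, abs_of_nonpos (mem_Iic.mp hx), neg_mul, one_mul, neg_neg]
        try ring)]
    exact integral_Iic_of_hasDerivAt_of_tendsto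
      (((hGd (-1) (by norm_num) 0).continuousAt).continuousWithinAt)
      (fun x _ => hGd (-1) (by norm_num) x)
      ((hintS (-1)).integrableOn)
      ((hGc (-1)).is_zero_at_infty.mono_left _root_.atBot_le_cocompact)
  rw [← hintErw, ← intervalIntegral.integral_Iic_add_Ioi hint.integrableOn hint.integrableOn, hIoi, hIic]
  -- final evaluation at 0
  simp only [hG, hp, k0, k1, k2, k3, mul_zero, neg_zero, zero_div, Real.exp_zero,
    iteratedDeriv_zero, zero_mul, zero_sub]
  field_simp
  ring
end

section
/- Particle no-crossing theorem: let w₁,...,w_N ≥ 0 with Σwᵢ ≤ 1, let D = {x ∈ ℝᴺ : x₁ < ⋯ < x_N}, and let v : D → ℝᴺ be the bounded Lipschitz velocity field vᵢ(x) = (Σⱼ wⱼK(xᵢ−xⱼ))² · Σ_{j≠i} wⱼK'''(xᵢ−xⱼ). Then the initial value problem ẋ = v(x), x(0) = x⁰ ∈ D admits a unique solution x : [0,∞) → D defined for all t ≥ 0; i.e. the ordering x₁(t) < ⋯ < x_N(t) persists for all time. -/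
open Finset

/-- The particle velocity field
`vᵢ(x) = (Σⱼ wⱼ K(xᵢ−xⱼ))² · Σ_{j≠i} wⱼ K'''(xᵢ−xⱼ)`. -/
noncomputable def particleVelocity (α : ℝ) (N : ℕ) (w : Fin N → ℝ)
    (x : Fin N → ℝ) (i : Fin N) : ℝ :=
  (∑ j, w j * biHelmholtzK α (x i - x j)) ^ 2 *
    ∑ j ∈ univ.filter (fun j => j ≠ i), w j * iteratedDeriv 3 (biHelmholtzK α) (x i - x j)


/-!
On the ordered cone `D` the sign of `xᵢ - xⱼ` is that of `i - j`. Since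
`K'''(u) = sign u · G(u)` for `u ≠ 0` with `G` even, bounded and Lipschitz, replacing
`sign (xᵢ - xⱼ)` by `sign (i - j)` extends the velocity field from `D` to a bounded, globally
Lipschitz field on `ℝᴺ`. The extended system has a global solution (Picard–Lindelöf on ever larger
intervals) which is unique (Grönwall). For adjacent particles `i, i + 1` the extended field
satisfies `vᵢ ≤ vᵢ₊₁` whenever `xᵢ = xᵢ₊₁`, so the Lipschitz bound gives `u' ≥ -c |u|` for the gap
`u = xᵢ₊₁ - xᵢ`, which therefore stays positive: the solution never leaves `D`, where it solves
the original system.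
-/

open Real
open scoped NNReal

/-- On `(0, ∞)` the kernel and all its derivatives have this form. -/
noncomputable def affExp (α a b r : ℝ) : ℝ := (a + b * r) * exp (-r / α)

section affExp
variable {α : ℝ} (a b : ℝ)

theorem hasDerivAt_affExp (r : ℝ) :
    HasDerivAt (affExp α a b) (affExp α (b - a / α) (-(b / α)) r) r := by
  have hlin : HasDerivAt (fun r => a + b * r) b r := by
    simpa using ((hasDerivAt_id r).const_mul b).const_add a
  have hexp : HasDerivAt (fun r => exp (-r / α)) (exp (-r / α) * (-1 / α)) r :=
    (((hasDerivAt_id r).neg).div_const α).exp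
  refine (hlin.fun_mul hexp).congr_deriv ?_
  simp only [affExp]
  ring

theorem deriv_affExp : deriv (affExp α a b) = affExp α (b - a / α) (-(b / α)) :=
  funext fun r => (hasDerivAt_affExp a b r).deriv

theorem abs_affExp_le (hα : 0 < α) {r : ℝ} (hr : 0 ≤ r) :
    |affExp α a b r| ≤ |a| + |b| * α := by
  have hdecay : r * exp (-r / α) ≤ α := by
    have h := (mul_exp_neg_le_exp_neg_one (r / α)).trans (exp_le_one_iff.2 (by norm_num))
    rwa [← neg_div, div_mul_eq_mul_div, div_le_one hα] at h
  have hexp : exp (-r / α) ≤ 1 :=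
    exp_le_one_iff.2 (div_nonpos_of_nonpos_of_nonneg (by linarith) hα.le)
  calc |affExp α a b r| ≤ (|a| + |b| * r) * exp (-r / α) := by
        rw [affExp, abs_mul, abs_exp]
        gcongr
        exact (abs_add_le _ _).trans (by rw [abs_mul, abs_of_nonneg hr])
    _ = |a| * exp (-r / α) + |b| * (r * exp (-r / α)) := by ring
    _ ≤ |a| * 1 + |b| * α := by gcongr
    _ = |a| + |b| * α := by ring

theorem exists_lipschitzWith_affExp_abs (hα : 0 < α) :
    ∃ L, LipschitzWith L (fun u => affExp α a b |u|) := by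
  have hIci : LipschitzOnWith (|b - a / α| + |-(b / α)| * α).toNNReal (affExp α a b)
      (Set.Ici 0) :=
    (convex_Ici 0).lipschitzOnWith_of_nnnorm_hasDerivWithin_le
      (fun r _ => (hasDerivAt_affExp a b r).hasDerivWithinAt)
      (fun r hr => NNReal.le_toNNReal_of_coe_le (abs_affExp_le _ _ hα hr))
  have habs : LipschitzOnWith 1 (fun u : ℝ => |u|) Set.univ :=
    lipschitzWith_one_norm.lipschitzOnWith
  exact ⟨_, lipschitzOnWith_univ.1 (hIci.comp habs fun u _ => abs_nonneg u)⟩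

end affExp

noncomputable def biHelmholtzK3 (α u : ℝ) : ℝ :=
  affExp α (1 / (2 * α ^ 4)) (-(1 / (4 * α ^ 5))) |u|

section kernel
variable {α : ℝ}

theorem biHelmholtzK_eq_affExp (hα : α ≠ 0) (u : ℝ) :
    biHelmholtzK α u = affExp α (1 / (4 * α)) (1 / (4 * α ^ 2)) |u| := by
  simp only [biHelmholtzK, affExp]
  field_simp

theorem iteratedDeriv_three_biHelmholtzK_of_pos (hα : α ≠ 0) {u : ℝ} (hu : 0 < u) :
    iteratedDeriv 3 (biHelmholtzK α) u = biHelmholtzK3 α u := by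
  have hK : biHelmholtzK α =ᶠ[nhds u] affExp α (1 / (4 * α)) (1 / (4 * α ^ 2)) := by
    filter_upwards [lt_mem_nhds hu] with v hv
    rw [biHelmholtzK_eq_affExp hα, abs_of_pos hv]
  rw [hK.iteratedDeriv_eq, biHelmholtzK3, abs_of_pos hu]
  simp only [iteratedDeriv_succ', iteratedDeriv_zero, deriv_affExp]
  congr 1 <;> field_simp; norm_num

theorem iteratedDeriv_three_biHelmholtzK (hα : α ≠ 0) {u : ℝ} (hu : u ≠ 0) :
    iteratedDeriv 3 (biHelmholtzK α) u = SignType.sign u * biHelmholtzK3 α u := by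
  rcases hu.lt_or_gt with hu | hu
  · have heven : (fun v => biHelmholtzK α (-v)) = biHelmholtzK α := by
      funext v
      simp only [biHelmholtzK, abs_neg]
    rw [← heven, iteratedDeriv_comp_neg,
      iteratedDeriv_three_biHelmholtzK_of_pos hα (neg_pos.2 hu), sign_neg hu, biHelmholtzK3,
      biHelmholtzK3, abs_neg]
    norm_num
  · rw [iteratedDeriv_three_biHelmholtzK_of_pos hα hu, sign_pos hu]
    simp

variable (hα : 0 < α)
include hα

theorem abs_biHelmholtzK_le (u : ℝ) : |biHelmholtzK α u| ≤ 1 / (2 * α) := by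
  rw [biHelmholtzK_eq_affExp hα.ne']
  refine (abs_affExp_le _ _ hα (abs_nonneg u)).trans_eq ?_
  simp only [abs_div, abs_one, abs_mul, abs_pow, abs_of_pos hα, Nat.abs_ofNat]
  field_simp
  ring

theorem abs_biHelmholtzK3_le (u : ℝ) : |biHelmholtzK3 α u| ≤ 3 / (4 * α ^ 4) := by
  refine (abs_affExp_le _ _ hα (abs_nonneg u)).trans_eq ?_
  simp only [abs_neg, abs_div, abs_one, abs_mul, abs_pow, abs_of_pos hα, Nat.abs_ofNat]
  field_simp
  ring

theorem biHelmholtzK3_zero_pos : 0 < biHelmholtzK3 α 0 := by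
  simp only [biHelmholtzK3, affExp, abs_zero, mul_zero, add_zero]
  positivity

theorem exists_lipschitzWith_biHelmholtzK : ∃ L, LipschitzWith L (biHelmholtzK α) := by
  rw [show biHelmholtzK α = _ from funext (biHelmholtzK_eq_affExp hα.ne')]
  exact exists_lipschitzWith_affExp_abs _ _ hα

theorem exists_lipschitzWith_biHelmholtzK3 : ∃ L, LipschitzWith L (biHelmholtzK3 α) :=
  exists_lipschitzWith_affExp_abs _ _ hα

end kernel

section weightedSum
variable {ι : Type*} [Fintype ι] {v : ι → ℝ}

theorem abs_sum_mul_le (hv : ∑ k, |v k| ≤ 1) {a : ι → ℝ} {M : ℝ} (hM : 0 ≤ M)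
    (ha : ∀ k, |a k| ≤ M) : |∑ k, v k * a k| ≤ M :=
  calc |∑ k, v k * a k| ≤ ∑ k, |v k| * |a k| := by
        simpa only [abs_mul] using abs_sum_le_sum_abs (fun k => v k * a k) univ
    _ ≤ ∑ k, |v k| * M := by gcongr with k; exact ha k
    _ = (∑ k, |v k|) * M := by rw [sum_mul]
    _ ≤ M := mul_le_of_le_one_left hM hv

theorem abs_sub_sub_sub_le_two_mul_dist (x y : ι → ℝ) (i k : ι) :
    |(x i - x k) - (y i - y k)| ≤ 2 * dist x y := by
  have hi := dist_le_pi_dist x y i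
  have hk := dist_le_pi_dist x y k
  rw [Real.dist_eq] at hi hk
  calc |(x i - x k) - (y i - y k)| = |(x i - y i) - (x k - y k)| := by ring_nf
    _ ≤ |x i - y i| + |x k - y k| := abs_sub _ _
    _ ≤ 2 * dist x y := by linarith

theorem abs_sum_mul_sub_sum_mul_le (hv : ∑ k, |v k| ≤ 1) {φ : ℝ → ℝ} {L : ℝ≥0}
    (hφ : LipschitzWith L φ) (x y : ι → ℝ) (i : ι) :
    |∑ k, v k * φ (x i - x k) - ∑ k, v k * φ (y i - y k)| ≤ 2 * L * dist x y := by
  simp_rw [← sum_sub_distrib, ← mul_sub]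
  refine abs_sum_mul_le hv (by positivity) fun k => ?_
  calc |φ (x i - x k) - φ (y i - y k)| ≤ L * |(x i - x k) - (y i - y k)| := by
        simpa only [Real.dist_eq] using hφ.dist_le_mul (x i - x k) (y i - y k)
    _ ≤ L * (2 * dist x y) := by gcongr; exact abs_sub_sub_sub_le_two_mul_dist x y i k
    _ = 2 * L * dist x y := by ring

end weightedSum

theorem abs_sq_mul_sub_sq_mul_le {a b c d A B : ℝ} (ha : |a| ≤ A) (hc : |c| ≤ A)
    (hd : |d| ≤ B) : |a ^ 2 * b - c ^ 2 * d| ≤ A ^ 2 * |b - d| + 2 * A * B * |a - c| := by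
  have hA : 0 ≤ A := (abs_nonneg a).trans ha
  have hB : 0 ≤ B := (abs_nonneg d).trans hd
  have hac : |a + c| ≤ 2 * A := (abs_add_le a c).trans (by linarith)
  calc |a ^ 2 * b - c ^ 2 * d| = |a ^ 2 * (b - d) + d * (a + c) * (a - c)| := by ring_nf
    _ ≤ |a| ^ 2 * |b - d| + |d| * |a + c| * |a - c| := by
        refine (abs_add_le _ _).trans_eq ?_
        rw [abs_mul, abs_mul, abs_mul, abs_pow]
    _ ≤ A ^ 2 * |b - d| + B * (2 * A) * |a - c| := by gcongr
    _ = A ^ 2 * |b - d| + 2 * A * B * |a - c| := by ring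

/-- On the ordered cone `sign (i - j) = sign (xᵢ - xⱼ)`, so this agrees with `particleVelocity`
there; unlike `sign (xᵢ - xⱼ)`, the index sign keeps the field Lipschitz across collisions. -/
noncomputable def extendedVelocity (α : ℝ) (N : ℕ) (w : Fin N → ℝ) (x : Fin N → ℝ)
    (i : Fin N) : ℝ :=
  (∑ j, w j * biHelmholtzK α (x i - x j)) ^ 2 *
    ∑ j, w j * SignType.sign ((i : ℤ) - j) * biHelmholtzK3 α (x i - x j)

section extendedVelocity
variable {α : ℝ} {N : ℕ} {w : Fin N → ℝ}

theorem sign_sub_eq_sign_sub_of_strictMono {x : Fin N → ℝ} (hx : StrictMono x) (i j : Fin N) :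
    SignType.sign (x i - x j) = SignType.sign ((i : ℤ) - j) := by
  rcases lt_trichotomy i j with h | rfl | h
  · rw [sign_neg (sub_neg.2 (hx h)), sign_neg (sub_neg.2 (by exact_mod_cast h))]
  · simp
  · rw [sign_pos (sub_pos.2 (hx h)), sign_pos (sub_pos.2 (by exact_mod_cast h))]

theorem particleVelocity_eq_extendedVelocity (hα : α ≠ 0) {x : Fin N → ℝ}
    (hx : StrictMono x) : particleVelocity α N w x = extendedVelocity α N w x := by
  funext i
  rw [particleVelocity, extendedVelocity, sum_filter]
  congr 1
  refine sum_congr rfl fun j _ => ?_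
  split_ifs with hji
  · rw [iteratedDeriv_three_biHelmholtzK hα (sub_ne_zero.2 (hx.injective.ne hji.symm)),
      sign_sub_eq_sign_sub_of_strictMono hx, mul_assoc]
  · simp [not_not.1 hji]

theorem sum_abs_mul_sign_le (hw : ∑ j, |w j| ≤ 1) (i : Fin N) :
    ∑ j, |w j * SignType.sign ((i : ℤ) - j)| ≤ 1 := by
  refine le_trans (sum_le_sum fun j _ => ?_) hw
  rw [abs_mul]
  refine mul_le_of_le_one_right (abs_nonneg _) ?_
  rcases SignType.sign ((i : ℤ) - j) with _ | _ | _ <;> simp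

theorem exists_norm_extendedVelocity_le (hα : 0 < α) (hw : ∑ j, |w j| ≤ 1) :
    ∃ C, ∀ x, ‖extendedVelocity α N w x‖ ≤ C := by
  refine ⟨(1 / (2 * α)) ^ 2 * (3 / (4 * α ^ 4)), fun x => ?_⟩
  refine (pi_norm_le_iff_of_nonneg (by positivity)).2 fun i => ?_
  rw [Real.norm_eq_abs, extendedVelocity, abs_mul, abs_pow]
  gcongr
  · exact abs_sum_mul_le hw (by positivity) fun j => abs_biHelmholtzK_le hα _
  · exact abs_sum_mul_le (sum_abs_mul_sign_le hw i) (by positivity)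
      fun j => abs_biHelmholtzK3_le hα _

theorem exists_lipschitzWith_extendedVelocity (hα : 0 < α) (hw : ∑ j, |w j| ≤ 1) :
    ∃ L, LipschitzWith L (extendedVelocity α N w) := by
  obtain ⟨LK, hLK⟩ := exists_lipschitzWith_biHelmholtzK hα
  obtain ⟨LG, hLG⟩ := exists_lipschitzWith_biHelmholtzK3 hα
  set A := 1 / (2 * α)
  set B := 3 / (4 * α ^ 4)
  have hP (x : Fin N → ℝ) (i : Fin N) : |∑ j, w j * biHelmholtzK α (x i - x j)| ≤ A :=
    abs_sum_mul_le hw (by positivity) fun j => abs_biHelmholtzK_le hα _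
  have hQ (x : Fin N → ℝ) (i : Fin N) :
      |∑ j, w j * SignType.sign ((i : ℤ) - j) * biHelmholtzK3 α (x i - x j)| ≤ B :=
    abs_sum_mul_le (sum_abs_mul_sign_le hw i) (by positivity) fun j => abs_biHelmholtzK3_le hα _
  refine ⟨_, LipschitzWith.of_dist_le' (K := A ^ 2 * (2 * LG) + 2 * A * B * (2 * LK))
    fun x y => (dist_pi_le_iff (by positivity)).2 fun i => ?_⟩
  rw [Real.dist_eq]
  calc _ ≤ _ := abs_sq_mul_sub_sq_mul_le (hP x i) (hP y i) (hQ y i)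
    _ ≤ A ^ 2 * (2 * LG * dist x y) + 2 * A * B * (2 * LK * dist x y) := by
        gcongr
        · exact abs_sum_mul_sub_sum_mul_le (sum_abs_mul_sign_le hw i) hLG x y i
        · exact abs_sum_mul_sub_sum_mul_le hw hLK x y i
    _ = (A ^ 2 * (2 * LG) + 2 * A * B * (2 * LK)) * dist x y := by ring

theorem extendedVelocity_le_of_eq (hα : 0 < α) (hw : ∀ j, 0 ≤ w j) {i j : Fin N}
    (hij : (j : ℕ) = i + 1) {z : Fin N → ℝ} (hz : z j = z i) :
    extendedVelocity α N w z i ≤ extendedVelocity α N w z j := by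
  simp only [extendedVelocity, hz]
  refine mul_le_mul_of_nonneg_left (sum_le_sum fun k _ => ?_) (sq_nonneg _)
  -- `sign (i - k)` and `sign (j - k)` differ only for `k ∈ {i, j}`, where `z i - z k = 0`.
  have hK3 := (biHelmholtzK3_zero_pos hα).le
  rcases eq_or_ne k i with rfl | hki
  · simp [hij, mul_nonneg (hw k) hK3]
  rcases eq_or_ne k j with rfl | hkj
  · simp [hij, hz, mul_nonneg (hw k) hK3]
  have hki' : (k : ℕ) ≠ i := Fin.val_ne_of_ne hki
  have hkj' : (k : ℕ) ≠ j := Fin.val_ne_of_ne hkj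
  have hsign : SignType.sign ((i : ℤ) - k) = SignType.sign ((j : ℤ) - k) := by
    rcases hki'.lt_or_gt with h | h
    · rw [sign_pos (by omega), sign_pos (by omega)]
    · rw [sign_neg (by omega), sign_neg (by omega)]
  rw [hsign]

end extendedVelocity

theorem neg_two_mul_abs_le_sub_of_lipschitzWith {ι : Type*} [Fintype ι] [DecidableEq ι]
    {F : (ι → ℝ) → ι → ℝ} {L : ℝ≥0} (hF : LipschitzWith L F) {i j : ι}
    (hF_eq : ∀ z : ι → ℝ, z j = z i → F z i ≤ F z j) (x : ι → ℝ) :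
    -(2 * L * |x j - x i|) ≤ F x j - F x i := by
  set z := x - Pi.single j (x j - x i)
  have hz : z j = z i := by
    by_cases h : i = j
    · rw [h]
    · simp [z, h]
  have hdist : dist x z = |x j - x i| := by
    rw [dist_eq_norm, show x - z = Pi.single j (x j - x i) by simp [z], Pi.norm_single,
      Real.norm_eq_abs]
  have hcoord (k : ι) : |F x k - F z k| ≤ L * |x j - x i| := by
    rw [← Real.dist_eq, ← hdist]
    exact (dist_le_pi_dist (F x) (F z) k).trans (hF.dist_le_mul x z)
  have hi := abs_le.1 (hcoord i)
  have hj := abs_le.1 (hcoord j)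
  linarith [hF_eq z hz]

theorem mul_exp_le_of_neg_mul_abs_le_deriv {u u' : ℝ → ℝ} {c : ℝ}
    (hu : ∀ s, HasDerivAt u (u' s) s) (hu' : ∀ s, -(c * |u s|) ≤ u' s) (h₀ : 0 < u 0)
    {t : ℝ} (ht : 0 ≤ t) : u 0 * exp (-(c + 1) * t) ≤ u t := by
  -- `-u` stays below the barrier `B`: where they touch, `u > 0` and the `+ 1` makes `B` win.
  set B : ℝ → ℝ := fun s => -(u 0 * exp (-(c + 1) * s))
  have hB (s : ℝ) : HasDerivAt B ((c + 1) * (u 0 * exp (-(c + 1) * s))) s := by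
    refine ((((hasDerivAt_id' s).const_mul (-(c + 1))).exp.const_mul (u 0)).fun_neg).congr_deriv
      ?_
    ring
  have hle := image_le_of_deriv_right_lt_deriv_boundary' (f := fun s => -u s)
    (f' := fun s => -u' s) (B := B) (a := 0) (b := t)
    (fun s _ => (hu s).neg.continuousAt.continuousWithinAt)
    (fun s _ => (hu s).neg.hasDerivWithinAt) (by simp [B])
    (fun s _ => (hB s).continuousAt.continuousWithinAt) (fun s _ => (hB s).hasDerivWithinAt) ?_
    ⟨ht, le_rfl⟩
  · simpa only [B, neg_le_neg_iff] using hle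
  · intro s _ hs
    simp only [B, neg_inj] at hs
    have hpos : 0 < u s := hs ▸ mul_pos h₀ (exp_pos _)
    have := hu' s
    rw [abs_of_pos hpos] at this
    rw [← hs]
    linarith

theorem strictMono_of_hasDerivAt {N : ℕ} {F : (Fin N → ℝ) → Fin N → ℝ} {L : ℝ≥0}
    (hF : LipschitzWith L F)
    (hF_eq : ∀ i j : Fin N, (j : ℕ) = i + 1 → ∀ z : Fin N → ℝ, z j = z i → F z i ≤ F z j)
    {x : ℝ → Fin N → ℝ} (hx : ∀ t, HasDerivAt x (F (x t)) t) (h₀ : StrictMono (x 0))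
    {t : ℝ} (ht : 0 ≤ t) : StrictMono (x t) := by
  cases N with
  | zero => exact fun i => i.elim0
  | succ n =>
    refine Fin.strictMono_iff_lt_succ.2 fun k => sub_pos.1 ?_
    have hu (s : ℝ) : HasDerivAt (fun s => x s k.succ - x s k.castSucc)
        (F (x s) k.succ - F (x s) k.castSucc) s :=
      (hasDerivAt_pi.1 (hx s) _).sub (hasDerivAt_pi.1 (hx s) _)
    have hu₀ : 0 < x 0 k.succ - x 0 k.castSucc := sub_pos.2 (h₀ k.castSucc_lt_succ)
    exact (mul_pos hu₀ (exp_pos _)).trans_le <| mul_exp_le_of_neg_mul_abs_le_deriv hu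
      (fun s => neg_two_mul_abs_le_sub_of_lipschitzWith hF (hF_eq _ _ (by simp)) (x s)) hu₀ ht

section ODE
variable {E : Type*} [NormedAddCommGroup E] [NormedSpace ℝ E] {F : E → E} {K : ℝ≥0}

theorem exists_forall_mem_Ioo_hasDerivAt [CompleteSpace E] (hF : LipschitzWith K F) {C : ℝ}
    (hC : ∀ x, ‖F x‖ ≤ C) (x₀ : E) (T : ℝ≥0) :
    ∃ x : ℝ → E, x 0 = x₀ ∧ ∀ t ∈ Set.Ioo (-T : ℝ) T, HasDerivAt x (F (x t)) t := by
  have hPL : IsPicardLindelof (fun _ => F) (tmin := -T) (tmax := T)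
      ⟨0, by simp⟩ x₀ (C.toNNReal * T) 0 C.toNNReal K :=
    IsPicardLindelof.of_time_independent (fun x _ => (hC x).trans (Real.le_coe_toNNReal C))
      hF.lipschitzOnWith (by simp)
  obtain ⟨x, hx₀, hx⟩ := hPL.exists_eq_forall_mem_Icc_hasDerivWithinAt₀
  exact ⟨x, hx₀, fun t ht =>
    (hx t (Set.Ioo_subset_Icc_self ht)).hasDerivAt (Icc_mem_nhds ht.1 ht.2)⟩

theorem exists_forall_hasDerivAt [CompleteSpace E] (hF : LipschitzWith K F) {C : ℝ}
    (hC : ∀ x, ‖F x‖ ≤ C) (x₀ : E) :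
    ∃ x : ℝ → E, x 0 = x₀ ∧ ∀ t, HasDerivAt x (F (x t)) t := by
  choose x hx₀ hx using fun n : ℕ => exists_forall_mem_Ioo_hasDerivAt hF hC x₀ (n + 1)
  have hagree (m n : ℕ) (t : ℝ) (hm : |t| < m + 1) (hn : |t| < n + 1) : x m t = x n t := by
    set T : ℝ := min (m + 1) (n + 1)
    have hT : 0 < T := lt_min (by positivity) (by positivity)
    have hsol (k : ℕ) (hk : T ≤ k + 1) : ∀ s ∈ Set.Ioo (-T) T,
        HasDerivAt (x k) (F (x k s)) s ∧ x k s ∈ Set.univ := fun s hs =>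
      ⟨hx k s (by push_cast; constructor <;> linarith [hs.1, hs.2]), trivial⟩
    exact ODE_solution_unique_of_mem_Ioo (v := fun _ => F) (fun _ _ => hF.lipschitzOnWith)
      (t₀ := 0) ⟨by linarith, hT⟩ (hsol m (min_le_left _ _)) (hsol n (min_le_right _ _))
      (by rw [hx₀, hx₀]) (abs_lt.1 (lt_min hm hn))
  refine ⟨fun t => x ⌊|t|⌋₊ t, by simpa using hx₀ 0, fun t => ?_⟩
  have hlt : |t| < ⌊|t|⌋₊ + 1 := Nat.lt_floor_add_one _
  have hev : (fun s => x ⌊|s|⌋₊ s) =ᶠ[nhds t] x ⌊|t|⌋₊ := by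
    filter_upwards [(continuous_abs.isOpen_preimage _ isOpen_Iio).mem_nhds hlt] with s hs
    exact hagree _ _ s (Nat.lt_floor_add_one _) hs
  exact (hx _ t (by push_cast; exact abs_lt.1 hlt)).congr_of_eventuallyEq hev

theorem eq_of_hasDerivAt_of_lipschitzWith (hF : LipschitzWith K F) {x y : ℝ → E}
    (hx : ∀ t, 0 ≤ t → HasDerivAt x (F (x t)) t) (hy : ∀ t, 0 ≤ t → HasDerivAt y (F (y t)) t)
    (h₀ : x 0 = y 0) {t : ℝ} (ht : 0 ≤ t) : x t = y t :=
  ODE_solution_unique (v := fun _ => F) (fun _ => hF)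
    (HasDerivAt.continuousOn fun s hs => hx s hs.1) (fun s hs => (hx s hs.1).hasDerivWithinAt)
    (HasDerivAt.continuousOn fun s hs => hy s hs.1) (fun s hs => (hy s hs.1).hasDerivWithinAt)
    h₀ ⟨ht, le_rfl⟩

end ODE

/-- Particle no-crossing theorem: the IVP `ẋ = v(x)`, `x(0) = x⁰` with `x⁰` in the
ordered cone `D = {x : x₁ < ⋯ < x_N}` has a unique global solution on `[0,∞)` which
remains in `D` for all time. -/
theorem stmt11 (α : ℝ) (hα : 0 < α) (N : ℕ) (w : Fin N → ℝ)
    (hw : ∀ j, 0 ≤ w j) (hw1 : ∑ j, w j ≤ 1)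
    (x0 : Fin N → ℝ) (hx0 : ∀ i j : Fin N, i < j → x0 i < x0 j) :
    ∃ x : ℝ → Fin N → ℝ,
      (x 0 = x0 ∧
        (∀ t : ℝ, 0 ≤ t → ∀ i j : Fin N, i < j → x t i < x t j) ∧
        (∀ t : ℝ, 0 ≤ t → ∀ i : Fin N,
          HasDerivAt (fun s => x s i) (particleVelocity α N w (x t) i) t)) ∧
      (∀ y : ℝ → Fin N → ℝ,
        (y 0 = x0 ∧
          (∀ t : ℝ, 0 ≤ t → ∀ i j : Fin N, i < j → y t i < y t j) ∧
          (∀ t : ℝ, 0 ≤ t → ∀ i : Fin N,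
            HasDerivAt (fun s => y s i) (particleVelocity α N w (y t) i) t)) →
        ∀ t : ℝ, 0 ≤ t → y t = x t) := by
  have hw' : ∑ j, |w j| ≤ 1 := by simpa only [abs_of_nonneg (hw _)] using hw1
  obtain ⟨C, hC⟩ := exists_norm_extendedVelocity_le hα hw'
  obtain ⟨L, hL⟩ := exists_lipschitzWith_extendedVelocity hα hw'
  obtain ⟨x, hx₀, hx⟩ := exists_forall_hasDerivAt hL hC x0
  have hD (t : ℝ) (ht : 0 ≤ t) : StrictMono (x t) :=
    strictMono_of_hasDerivAt hL (fun _ _ hij _ hz => extendedVelocity_le_of_eq hα hw hij hz) hx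
      (hx₀ ▸ fun i j => hx0 i j) ht
  refine ⟨x, ⟨hx₀, fun t ht _ _ hij => hD t ht hij, fun t ht i => ?_⟩, ?_⟩
  · rw [particleVelocity_eq_extendedVelocity hα.ne' (hD t ht)]
    exact hasDerivAt_pi.1 (hx t) i
  · rintro y ⟨hy₀, hyD, hy⟩ t ht
    refine eq_of_hasDerivAt_of_lipschitzWith hL (fun s hs => hasDerivAt_pi.2 fun i => ?_)
      (fun s _ => hx s) (hy₀.trans hx₀.symm) ht
    rw [← particleVelocity_eq_extendedVelocity hα.ne' fun i j hij => hyD s hs i j hij]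
    exact hy s hs i
end

section
/- Let μ be a finite positive Borel measure on ℝ with ‖μ‖ ≤ 1 and let c(·,t) : ℝ → ℝ be strictly increasing Borel functions (t ≥ 0) with c(x,·) ∈ C¹ solving the characteristic ODE of the Geometric Thin-Film equation. Then for x < y and t ≥ 0: c(y,t) − c(x,t) ≤ (y−x)e^{At} + (Γ_{x,y}/A)(e^{At}−1), where A = 2‖K‖_∞(2Lip(K)‖K'''‖_∞ + ‖K‖_∞Lip(K''')) and Γ_{x,y} = ‖K‖_∞²‖K'''‖_∞(μ[x,y)+μ(x,y]). -/
open MeasureTheory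

/-!
The gap `f(t) = c(y,t) − c(x,t)` is positive, and `f'` is the difference of the velocities at `y`
and `x`, i.e. `H_y² I_y − H_x² I_x = (H_y − H_x)(H_y + H_x) I_y + H_x² (I_y − I_x)`.
The `H`-factors are bounded by `‖K‖_∞`, and `|H_y − H_x| ≤ Lip(K) f`. In `I_y − I_x`, a point `z`
outside `[x, y]` sees `c(y) − c(z)` and `c(x) − c(z)` with the same sign, so the Lipschitz bound of
`K'''` on that half-line gives `Lip(K''') f`; the points of `[x, y)` (for `I_y`) and `(x, y]`
(for `I_x`) contribute at most `‖K'''‖_∞` times their mass. Thus `|f'| ≤ A f + Γ_{x,y}`, and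
Grönwall's inequality concludes.
-/

open Set

lemma abs_sq_mul_sub_sq_mul_le_s13 {a b p q M N δ ε : ℝ} (ha : |a| ≤ M) (hb : |b| ≤ M)
    (hab : |a - b| ≤ δ) (hp : |p| ≤ N) (hpq : |p - q| ≤ ε) :
    |a ^ 2 * p - b ^ 2 * q| ≤ 2 * M * N * δ + M ^ 2 * ε := by
  have hsum : |a + b| ≤ 2 * M := (abs_add_le a b).trans (by linarith : |a| + |b| ≤ 2 * M)
  calc |a ^ 2 * p - b ^ 2 * q| = |(a - b) * (a + b) * p + b ^ 2 * (p - q)| := by ring_nf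
    _ ≤ |a - b| * |a + b| * |p| + |b| ^ 2 * |p - q| :=
      (abs_add_le _ _).trans_eq (by rw [abs_mul, abs_mul, abs_mul, abs_pow])
    _ ≤ δ * (2 * M) * N + M ^ 2 * ε := by
      have hδ : 0 ≤ δ := (abs_nonneg _).trans hab
      have hM : 0 ≤ M := (abs_nonneg _).trans ha
      gcongr
    _ = 2 * M * N * δ + M ^ 2 * ε := by ring

section FiniteMeasure

variable {X : Type*} [MeasurableSpace X] {μ : Measure X} [IsFiniteMeasure μ]

lemma measureReal_le_one_of_univ_le_one (hμ : μ univ ≤ 1) (S : Set X) : μ.real S ≤ 1 :=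
  (measureReal_mono (subset_univ S)).trans <| by
    simpa [measureReal_def] using ENNReal.toReal_mono ENNReal.one_ne_top hμ

lemma abs_setIntegral_le_of_abs_le {F : X → ℝ} {S : Set X} {C : ℝ} (hμ : μ univ ≤ 1)
    (hC : 0 ≤ C) (hF : ∀ z ∈ S, |F z| ≤ C) : |∫ z in S, F z ∂μ| ≤ C :=
  (norm_setIntegral_le_of_norm_le_const (f := F) (measure_lt_top μ S) hF).trans
    (mul_le_of_le_one_right hC (measureReal_le_one_of_univ_le_one hμ S))

end FiniteMeasure

/-- The right-hand side `H(c,w,t)² ∫_{z≠w} K'''(c(w,t)−c(z,t)) dμ(z)` of the characteristic ODE,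
with `K''' = D` and the configuration `c(·,t)` frozen as `g`. -/
noncomputable def characteristicVelocity (μ : Measure ℝ) (K D g : ℝ → ℝ) (w : ℝ) : ℝ :=
  (∫ z, K (g w - g z) ∂μ) ^ 2 * ∫ z in {w}ᶜ, D (g w - g z) ∂μ

section Velocity

variable {μ : Measure ℝ} [IsFiniteMeasure μ] {K D g : ℝ → ℝ} {M L : ℝ}

lemma abs_integral_comp_sub_le (hμ : μ univ ≤ 1) (hK : ∀ z, |K z| ≤ M) (u : ℝ) :
    |∫ z, K (u - g z) ∂μ| ≤ M := by
  simpa using abs_setIntegral_le_of_abs_le (S := univ) hμ ((abs_nonneg _).trans (hK 0))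
    fun z _ => hK (u - g z)

lemma abs_integral_comp_sub_sub_le (hμ : μ univ ≤ 1) (hK : ∀ z, |K z| ≤ M)
    (hLK : ∀ a b, |K a - K b| ≤ L * |a - b|) (hg : Measurable g) (u v : ℝ) :
    |∫ z, K (u - g z) ∂μ - ∫ z, K (v - g z) ∂μ| ≤ L * |u - v| := by
  have hKm : Measurable K :=
    (LipschitzWith.of_dist_le' fun a b => by simpa [Real.dist_eq] using hLK a b).continuous
      |>.measurable
  have hint : ∀ w, Integrable (fun z => K (w - g z)) μ := fun w =>
    (integrable_const M).mono' (hKm.comp (measurable_const.sub hg)).aestronglyMeasurable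
      (.of_forall fun z => hK _)
  have hL : 0 ≤ L := by
    have := (abs_nonneg _).trans (hLK 1 0); norm_num at this; exact this
  rw [← integral_sub (hint u) (hint v)]
  simpa using abs_setIntegral_le_of_abs_le (S := univ) hμ (mul_nonneg hL (abs_nonneg _))
    fun z _ => by simpa using hLK (u - g z) (v - g z)

lemma integrableOn_comp_sub_of_notMem (hD : ∀ z, z ≠ 0 → |D z| ≤ M) (hDm : Measurable D)
    (hg : StrictMono g) ⦃S : Set ℝ⦄ (hS : MeasurableSet S) ⦃w : ℝ⦄ (hw : w ∉ S) :
    IntegrableOn (fun z => D (g w - g z)) S μ :=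
  Measure.integrableOn_of_bounded (measure_ne_top μ S)
    (hDm.comp (measurable_const.sub hg.monotone.measurable)).aestronglyMeasurable
    (ae_restrict_of_forall_mem hS fun _ hz =>
      hD _ (sub_ne_zero.2 (hg.injective.ne (ne_of_mem_of_not_mem hz hw).symm)))

lemma abs_setIntegral_comp_sub_le (hD : ∀ z, z ≠ 0 → |D z| ≤ M) (hg : Function.Injective g)
    {S : Set ℝ} {w : ℝ} (hw : w ∉ S) : |∫ z in S, D (g w - g z) ∂μ| ≤ M * μ.real S :=
  norm_setIntegral_le_of_norm_le_const (f := fun z => D (g w - g z)) (measure_lt_top μ S)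
    fun _ hz => hD _ (sub_ne_zero.2 (hg.ne (ne_of_mem_of_not_mem hz hw).symm))

lemma abs_offDiagIntegral_le (hμ : μ univ ≤ 1) (hD : ∀ z, z ≠ 0 → |D z| ≤ M)
    (hg : Function.Injective g) (w : ℝ) : |∫ z in {w}ᶜ, D (g w - g z) ∂μ| ≤ M :=
  (abs_setIntegral_comp_sub_le hD hg (by simp)).trans
    (mul_le_of_le_one_right ((abs_nonneg _).trans (hD 1 one_ne_zero))
      (measureReal_le_one_of_univ_le_one hμ _))

lemma abs_setIntegral_compl_Icc_sub_le (hμ : μ univ ≤ 1) (hD : ∀ z, z ≠ 0 → |D z| ≤ M)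
    (hDm : Measurable D) (hLpos : ∀ a b, 0 < a → 0 < b → |D a - D b| ≤ L * |a - b|)
    (hLneg : ∀ a b, a < 0 → b < 0 → |D a - D b| ≤ L * |a - b|) (hg : StrictMono g)
    {x y : ℝ} (hxy : x < y) :
    |∫ z in (Icc x y)ᶜ, D (g y - g z) ∂μ - ∫ z in (Icc x y)ᶜ, D (g x - g z) ∂μ| ≤
      L * (g y - g x) := by
  have hO : MeasurableSet (Icc x y)ᶜ := measurableSet_Icc.compl
  have hgap : 0 < g y - g x := sub_pos.2 (hg hxy)
  have hL : 0 ≤ L := by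
    have := (abs_nonneg _).trans (hLpos 2 1 two_pos one_pos); norm_num at this; exact this
  rw [← integral_sub (integrableOn_comp_sub_of_notMem hD hDm hg hO (by simp [hxy.le]))
    (integrableOn_comp_sub_of_notMem hD hDm hg hO (by simp [hxy.le]))]
  refine abs_setIntegral_le_of_abs_le hμ (mul_nonneg hL hgap.le) fun z hz => ?_
  have hdiff : |g y - g z - (g x - g z)| = g y - g x := by
    rw [sub_sub_sub_cancel_right, abs_of_pos hgap]
  rw [← hdiff]
  rcases lt_or_gt_of_ne (show z ≠ x by rintro rfl; simp [hxy.le] at hz) with hzx | hxz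
  · exact hLpos _ _ (sub_pos.2 (hg (hzx.trans hxy))) (sub_pos.2 (hg hzx))
  · have hyz : y < z := lt_of_not_ge fun hzy => hz ⟨hxz.le, hzy⟩
    exact hLneg _ _ (sub_neg.2 (hg hyz)) (sub_neg.2 (hg (hxy.trans hyz)))

lemma abs_offDiagIntegral_sub_le (hμ : μ univ ≤ 1) (hD : ∀ z, z ≠ 0 → |D z| ≤ M)
    (hDm : Measurable D) (hLpos : ∀ a b, 0 < a → 0 < b → |D a - D b| ≤ L * |a - b|)
    (hLneg : ∀ a b, a < 0 → b < 0 → |D a - D b| ≤ L * |a - b|) (hg : StrictMono g)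
    {x y : ℝ} (hxy : x < y) :
    |∫ z in {y}ᶜ, D (g y - g z) ∂μ - ∫ z in {x}ᶜ, D (g x - g z) ∂μ| ≤
      L * (g y - g x) + M * (μ.real (Ico x y) + μ.real (Ioc x y)) := by
  have hO : MeasurableSet (Icc x y)ᶜ := measurableSet_Icc.compl
  have hsplit_y : ({y}ᶜ : Set ℝ) = (Icc x y)ᶜ ∪ Ico x y := by
    ext z; simp only [mem_compl_iff, mem_singleton_iff, mem_union, mem_Icc, mem_Ico]; grind
  have hsplit_x : ({x}ᶜ : Set ℝ) = (Icc x y)ᶜ ∪ Ioc x y := by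
    ext z; simp only [mem_compl_iff, mem_singleton_iff, mem_union, mem_Icc, mem_Ioc]; grind
  have hint := integrableOn_comp_sub_of_notMem (μ := μ) hD hDm hg
  rw [hsplit_y, hsplit_x,
    setIntegral_union (disjoint_compl_left.mono_right Ico_subset_Icc_self) measurableSet_Ico
      (hint hO (by simp [hxy.le])) (hint measurableSet_Ico (by simp)),
    setIntegral_union (disjoint_compl_left.mono_right Ioc_subset_Icc_self) measurableSet_Ioc
      (hint hO (by simp [hxy.le])) (hint measurableSet_Ioc (by simp))]
  have houter := abs_setIntegral_compl_Icc_sub_le hμ hD hDm hLpos hLneg hg hxy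
  have hmid_y := abs_setIntegral_comp_sub_le (μ := μ) hD hg.injective (S := Ico x y) (w := y)
    (by simp)
  have hmid_x := abs_setIntegral_comp_sub_le (μ := μ) hD hg.injective (S := Ioc x y) (w := x)
    (by simp)
  rw [abs_le] at houter hmid_y hmid_x ⊢
  constructor <;> linarith [houter.1, houter.2, hmid_y.1, hmid_y.2, hmid_x.1, hmid_x.2]

lemma abs_characteristicVelocity_sub_le {MK LK MD LD : ℝ} (hμ : μ univ ≤ 1)
    (hK : ∀ z, |K z| ≤ MK) (hLK : ∀ a b, |K a - K b| ≤ LK * |a - b|)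
    (hD : ∀ z, z ≠ 0 → |D z| ≤ MD) (hDm : Measurable D)
    (hLpos : ∀ a b, 0 < a → 0 < b → |D a - D b| ≤ LD * |a - b|)
    (hLneg : ∀ a b, a < 0 → b < 0 → |D a - D b| ≤ LD * |a - b|) (hg : StrictMono g)
    {x y : ℝ} (hxy : x < y) :
    |characteristicVelocity μ K D g y - characteristicVelocity μ K D g x| ≤
      (2 * MK * LK * MD + MK ^ 2 * LD) * (g y - g x) +
        MK ^ 2 * MD * (μ.real (Ico x y) + μ.real (Ioc x y)) := by
  have hH := abs_integral_comp_sub_sub_le hμ hK hLK hg.monotone.measurable (g y) (g x)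
  rw [abs_of_pos (sub_pos.2 (hg hxy))] at hH
  exact (abs_sq_mul_sub_sq_mul_le_s13 (abs_integral_comp_sub_le hμ hK (g y))
    (abs_integral_comp_sub_le hμ hK (g x)) hH (abs_offDiagIntegral_le hμ hD hg.injective y)
    (abs_offDiagIntegral_sub_le hμ hD hDm hLpos hLneg hg hxy)).trans_eq (by ring)

end Velocity

lemma abs_le_of_hasDerivAt_of_abs_deriv_le {f f' : ℝ → ℝ} {A ε t : ℝ} (hA : A ≠ 0) (ht : 0 ≤ t)
    (hf : ∀ s, 0 ≤ s → HasDerivAt f (f' s) s) (hbound : ∀ s, 0 ≤ s → |f' s| ≤ A * |f s| + ε) :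
    |f t| ≤ |f 0| * Real.exp (A * t) + ε / A * (Real.exp (A * t) - 1) := by
  have := norm_le_gronwallBound_of_norm_deriv_right_le (δ := |f 0|)
    (fun s hs => (hf s hs.1).continuousAt.continuousWithinAt)
    (fun s hs => (hf s hs.1).hasDerivWithinAt) (by simp) (fun s hs => hbound s hs.1) t ⟨ht, le_rfl⟩
  simpa [gronwallBound_of_K_ne_0 hA] using this

lemma measurable_iteratedDeriv_succ (n : ℕ) (f : ℝ → ℝ) : Measurable (iteratedDeriv (n + 1) f) := by
  rw [iteratedDeriv_succ]; exact measurable_deriv _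

theorem stmt13_general (α : ℝ)
    (μ : Measure ℝ) [IsFiniteMeasure μ] (hμ : μ Set.univ ≤ 1)
    (MK LK MK3 LK3 : ℝ)
    (hMK : ∀ z : ℝ, |biHelmholtzK α z| ≤ MK)
    (hLK : ∀ a b : ℝ, |biHelmholtzK α a - biHelmholtzK α b| ≤ LK * |a - b|)
    (hMK3 : ∀ z : ℝ, z ≠ 0 → |iteratedDeriv 3 (biHelmholtzK α) z| ≤ MK3)
    (hLK3p : ∀ a b : ℝ, 0 < a → 0 < b →
      |iteratedDeriv 3 (biHelmholtzK α) a - iteratedDeriv 3 (biHelmholtzK α) b| ≤ LK3 * |a - b|)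
    (hLK3m : ∀ a b : ℝ, a < 0 → b < 0 →
      |iteratedDeriv 3 (biHelmholtzK α) a - iteratedDeriv 3 (biHelmholtzK α) b| ≤ LK3 * |a - b|)
    (A : ℝ) (hA : A = 2 * MK * (2 * LK * MK3 + MK * LK3)) (hApos : 0 < A)
    (c : ℝ → ℝ → ℝ)
    (hinit : ∀ x : ℝ, c x 0 = x)
    (hmono : ∀ t : ℝ, 0 ≤ t → StrictMono (fun x => c x t))
    (hode : ∀ x : ℝ, ∀ t : ℝ, 0 ≤ t →
      HasDerivAt (fun s => c x s)
        ((∫ z, biHelmholtzK α (c x t - c z t) ∂μ) ^ 2 *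
          ∫ z in {x}ᶜ, iteratedDeriv 3 (biHelmholtzK α) (c x t - c z t) ∂μ) t) :
    ∀ x y : ℝ, x < y → ∀ t : ℝ, 0 ≤ t →
      c y t - c x t ≤ (y - x) * Real.exp (A * t) +
        (MK ^ 2 * MK3 * ((μ (Set.Ico x y)).toReal + (μ (Set.Ioc x y)).toReal) / A) *
          (Real.exp (A * t) - 1) := by
  intro x y hxy t ht
  have hrate : 2 * MK * LK * MK3 + MK ^ 2 * LK3 ≤ A := by
    have : 2 * MK * LK * MK3 + MK ^ 2 * LK3 = A / 2 := by rw [hA]; ring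
    linarith
  have key := abs_le_of_hasDerivAt_of_abs_deriv_le (f := fun s => c y s - c x s) hApos.ne' ht
    (fun s hs => (hode y s hs).sub (hode x s hs)) fun s hs => by
      have hgap : 0 < c y s - c x s := sub_pos.2 (hmono s hs hxy)
      refine (abs_characteristicVelocity_sub_le hμ hMK hLK hMK3
        (measurable_iteratedDeriv_succ 2 _) hLK3p hLK3m (hmono s hs) hxy).trans ?_
      rw [abs_of_pos hgap]
      exact add_le_add (mul_le_mul_of_nonneg_right hrate hgap.le) le_rfl
  simp only [hinit, abs_of_pos (sub_pos.2 hxy)] at key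
  exact (le_abs_self _).trans key

/-- Upper separation estimate for characteristic curves of the Geometric Thin-Film
equation: `c(y,t) − c(x,t) ≤ (y−x)e^{At} + (Γ_{x,y}/A)(e^{At}−1)`. -/
theorem stmt13 (α : ℝ) (hα : 0 < α)
    (μ : Measure ℝ) [IsFiniteMeasure μ] (hμ : μ Set.univ ≤ 1)
    (MK LK MK3 LK3 : ℝ)
    (hMK : ∀ z : ℝ, |biHelmholtzK α z| ≤ MK)
    (hLK : ∀ a b : ℝ, |biHelmholtzK α a - biHelmholtzK α b| ≤ LK * |a - b|)
    (hMK3 : ∀ z : ℝ, z ≠ 0 → |iteratedDeriv 3 (biHelmholtzK α) z| ≤ MK3)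
    (hLK3p : ∀ a b : ℝ, 0 < a → 0 < b →
      |iteratedDeriv 3 (biHelmholtzK α) a - iteratedDeriv 3 (biHelmholtzK α) b| ≤ LK3 * |a - b|)
    (hLK3m : ∀ a b : ℝ, a < 0 → b < 0 →
      |iteratedDeriv 3 (biHelmholtzK α) a - iteratedDeriv 3 (biHelmholtzK α) b| ≤ LK3 * |a - b|)
    (A : ℝ) (hA : A = 2 * MK * (2 * LK * MK3 + MK * LK3)) (hApos : 0 < A)
    (c : ℝ → ℝ → ℝ)
    (hinit : ∀ x : ℝ, c x 0 = x)
    (hmono : ∀ t : ℝ, 0 ≤ t → StrictMono (fun x => c x t))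
    (hmeas : ∀ t : ℝ, 0 ≤ t → Measurable (fun x => c x t))
    (hode : ∀ x : ℝ, ∀ t : ℝ, 0 ≤ t →
      HasDerivAt (fun s => c x s)
        ((∫ z, biHelmholtzK α (c x t - c z t) ∂μ) ^ 2 *
          ∫ z in {x}ᶜ, iteratedDeriv 3 (biHelmholtzK α) (c x t - c z t) ∂μ) t) :
    ∀ x y : ℝ, x < y → ∀ t : ℝ, 0 ≤ t →
      c y t - c x t ≤ (y - x) * Real.exp (A * t) +
        (MK ^ 2 * MK3 * ((μ (Set.Ico x y)).toReal + (μ (Set.Ioc x y)).toReal) / A) *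
          (Real.exp (A * t) - 1) :=
  stmt13_general α μ hμ MK LK MK3 LK3 hMK hLK hMK3 hLK3p hLK3m A hA hApos c hinit hmono hode
end

section
/- Approximation lemma: let μ ∈ M⁺(ℝ), F ⊂ ℝ dense and containing all atoms of μ, (Mₙ) an increasing sequence of finite subsets of F with ∪Mₙ = F, and μₙ = Σ_{x∈Mₙ} ωₙ(x)δₓ where ωₙ(x) = μ[x,x') (x' the successor of x in Mₙ) and ωₙ(max Mₙ) = μ[max Mₙ, ∞). If U ⊆ ℝ is a finite union of open intervals and f : ℝ → ℝ is bounded with all discontinuities contained in F ∪ (ℝ∖U), then ∫_U f dμₙ → ∫_U f dμ. -/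
/-!
Integrating against `μₙ` amounts to integrating against `μ` the step function that takes on
`[x, x')` the value of `g = 𝟙_U f` at the left endpoint `x ∈ Mₙ`, i.e. at the largest point
of `Mₙ` below `t`. At `t ∈ F` this point is eventually `t` itself; elsewhere it converges to
`t` from the left because `F` is dense, so the step functions converge to `g t` wherever `g`
is continuous. The exceptional points lie in the finite set `∂U \ F`, which carries no atom
of `μ` and is therefore null, and dominated convergence concludes.
-/

open MeasureTheory Filter Set Topology

section StepCell

variable {α β : Type*} [LinearOrder α]

/-- The points `t` for which `x` is the largest element of `M` in `(-∞, t]` (when `x ∈ M`):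
`[x, x')` with `x'` the successor of `x` in `M`, or `[x, ∞)` if `x = max M`. -/
def stepCell (M : Finset α) (x : α) : Set α :=
  {t | x ≤ t ∧ ∀ y ∈ M, x < y → t < y}

theorem mem_stepCell_iff_isGreatest {M : Finset α} {x t : α} (hx : x ∈ M) :
    t ∈ stepCell M x ↔ IsGreatest {y | y ∈ M ∧ y ≤ t} x := by
  refine ⟨fun ⟨hxt, hsucc⟩ => ⟨⟨hx, hxt⟩, fun y ⟨hy, hyt⟩ => ?_⟩,
    fun ⟨⟨_, hxt⟩, hmax⟩ => ⟨hxt, fun y hy hxy => ?_⟩⟩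
  · exact not_lt.1 fun hxy => (hsucc y hy hxy).not_ge hyt
  · exact not_le.1 fun hyt => (hmax ⟨hy, hyt⟩).not_gt hxy

theorem exists_isGreatest_le {M : Finset α} {y t : α} (hy : y ∈ M) (hyt : y ≤ t) :
    ∃ x, IsGreatest {y | y ∈ M ∧ y ≤ t} x ∧ y ≤ x := by
  have hne : (M.filter (· ≤ t)).Nonempty := ⟨y, Finset.mem_filter.2 ⟨hy, hyt⟩⟩
  have hgreatest := (M.filter (· ≤ t)).isGreatest_max' hne
  rw [Finset.coe_filter] at hgreatest
  exact ⟨_, hgreatest, hgreatest.2 ⟨hy, hyt⟩⟩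

theorem measurableSet_stepCell [TopologicalSpace α] [OrderClosedTopology α] [MeasurableSpace α]
    [OpensMeasurableSpace α] (M : Finset α) (x : α) : MeasurableSet (stepCell M x) := by
  have : stepCell M x = Ici x ∩ ⋂ y ∈ M.filter (x < ·), Iio y := by
    ext t
    simp [stepCell]
  rw [this]
  exact measurableSet_Ici.inter (Finset.measurableSet_biInter _ fun y _ => measurableSet_Iio)

noncomputable def stepApprox [AddCommMonoid β] (g : α → β) (M : Finset α) (t : α) : β :=
  ∑ x ∈ M, (stepCell M x).indicator (fun _ => g x) t

variable [AddCommMonoid β] {g : α → β} {M : Finset α} {x t : α}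

theorem stepApprox_eq_of_isGreatest (h : IsGreatest {y | y ∈ M ∧ y ≤ t} x) :
    stepApprox g M t = g x := by
  rw [stepApprox, Finset.sum_eq_single_of_mem x h.1.1]
  · exact indicator_of_mem ((mem_stepCell_iff_isGreatest h.1.1).2 h) _
  · intro y hy hyx
    refine indicator_of_notMem (fun ht => hyx ?_) _
    exact ((mem_stepCell_iff_isGreatest hy).1 ht).unique h

theorem stepApprox_eq_of_mem (ht : t ∈ M) : stepApprox g M t = g t :=
  stepApprox_eq_of_isGreatest ⟨⟨ht, le_rfl⟩, fun _ hy => hy.2⟩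

theorem stepApprox_eq_zero (h : ∀ y ∈ M, t < y) : stepApprox g M t = 0 :=
  Finset.sum_eq_zero fun x hx =>
    indicator_of_notMem (fun ht => (h x hx).not_ge ht.1) _

end StepCell

theorem stepCell_eq_ite {α : Type*} [ConditionallyCompleteLinearOrder α] (M : Finset α)
    (x : α) :
    stepCell M x = if (M.filter (fun y => x < y)).Nonempty
      then Ico x (sInf {y | y ∈ M ∧ x < y}) else Ici x := by
  split_ifs with h
  · have hfin : {y | y ∈ M ∧ x < y}.Finite := M.finite_toSet.subset fun y hy => hy.1
    have hne : {y | y ∈ M ∧ x < y}.Nonempty :=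
      let ⟨y, hy⟩ := h; ⟨y, Finset.mem_filter.1 hy⟩
    ext t
    simp [stepCell, hfin.lt_csInf_iff hne]
  · ext t
    simp_all [stepCell, Finset.filter_nonempty_iff]

theorem norm_stepApprox_le {α E : Type*} [LinearOrder α] [NormedAddCommGroup E] {g : α → E}
    {B : ℝ} (hg : ∀ x, ‖g x‖ ≤ B) (hB : 0 ≤ B) (M : Finset α) (t : α) :
    ‖stepApprox g M t‖ ≤ B := by
  by_cases h : ∃ y ∈ M, y ≤ t
  · obtain ⟨y, hy, hyt⟩ := h
    obtain ⟨x, hx, -⟩ := exists_isGreatest_le hy hyt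
    rw [stepApprox_eq_of_isGreatest hx]
    exact hg x
  · push Not at h
    rw [stepApprox_eq_zero h, norm_zero]
    exact hB

theorem stronglyMeasurable_stepApprox {α E : Type*} [TopologicalSpace α] [LinearOrder α]
    [OrderClosedTopology α] [MeasurableSpace α] [OpensMeasurableSpace α] [NormedAddCommGroup E]
    (g : α → E) (M : Finset α) : StronglyMeasurable (stepApprox g M) :=
  Finset.stronglyMeasurable_fun_sum _ fun x _ =>
    stronglyMeasurable_const.indicator (measurableSet_stepCell M x)

section Convergence

variable {α β : Type*} [LinearOrder α] [AddCommMonoid β] [TopologicalSpace β] {g : α → β}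
  {M : ℕ → Finset α} {t : α}

theorem tendsto_stepApprox_of_mem (hM : Monotone M) {N : ℕ} (ht : t ∈ M N) :
    Tendsto (fun n => stepApprox g (M n) t) atTop (𝓝 (g t)) :=
  tendsto_const_nhds.congr' <| (eventually_ge_atTop N).mono fun _ hn =>
    (stepApprox_eq_of_mem (hM hn ht)).symm

theorem tendsto_stepApprox_of_continuousAt [TopologicalSpace α] [OrderTopology α] [NoMinOrder α]
    [DenselyOrdered α] (hM : Monotone M)
    (hdense : Dense (⋃ n, (M n : Set α))) (hg : ContinuousAt g t) :
    Tendsto (fun n => stepApprox g (M n) t) atTop (𝓝 (g t)) := by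
  intro V hV
  rw [mem_map]
  obtain ⟨s, hst, hs⟩ :=
    mem_nhdsLE_iff_exists_Ioc_subset.1 (hg.continuousWithinAt.preimage_mem_nhdsWithin hV)
  obtain ⟨y, hy, hys, hyt⟩ := hdense.exists_mem_open isOpen_Ioo (nonempty_Ioo.2 hst)
  obtain ⟨N, hN⟩ := mem_iUnion.1 hy
  filter_upwards [eventually_ge_atTop N] with n hn
  obtain ⟨x, hx, hyx⟩ := exists_isGreatest_le (hM hn hN) hyt.le
  rw [mem_preimage, stepApprox_eq_of_isGreatest hx]
  exact hs ⟨hys.trans_le hyx, hx.1.2⟩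

end Convergence

theorem integral_sum_dirac_eq_integral_stepApprox {α E : Type*} [TopologicalSpace α]
    [LinearOrder α] [OrderClosedTopology α] [MeasurableSpace α] [OpensMeasurableSpace α]
    [MeasurableSingletonClass α] [NormedAddCommGroup E] [NormedSpace ℝ E] [CompleteSpace E]
    (μ : Measure α) [IsFiniteMeasure μ] (g : α → E) (M : Finset α) :
    ∫ t, g t ∂(∑ x ∈ M, μ (stepCell M x) • Measure.dirac x) =
      ∫ t, stepApprox g M t ∂μ := by
  unfold stepApprox
  rw [integral_finsetSum_measure fun x _ =>
      (integrable_dirac enorm_lt_top).smul_measure (measure_ne_top μ _),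
    integral_finsetSum _ fun x _ =>
      (integrable_const (g x)).indicator (measurableSet_stepCell M x)]
  refine Finset.sum_congr rfl fun x _ => ?_
  rw [integral_smul_measure, integral_dirac,
    integral_indicator_const _ (measurableSet_stepCell M x), measureReal_def]

theorem continuousAt_indicator_of_notMem_frontier {X E : Type*} [TopologicalSpace X] [Zero E]
    [TopologicalSpace E] {s : Set X} {f : X → E} {x : X} (hx : x ∉ frontier s)
    (hf : x ∈ s → ContinuousAt f x) : ContinuousAt (s.indicator f) x := by
  rw [frontier, Set.mem_sdiff, not_and_not_right] at hx
  by_cases hxs : x ∈ closure s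
  · have hint := hx hxs
    refine (hf (interior_subset hint)).congr ?_
    filter_upwards [isOpen_interior.mem_nhds hint] with y hy
    exact (indicator_of_mem (interior_subset hy) f).symm
  · refine (continuousAt_const : ContinuousAt (fun _ => (0 : E)) x).congr ?_
    filter_upwards [isClosed_closure.isOpen_compl.mem_nhds hxs] with y hy
    exact (indicator_of_notMem (fun h => hy (subset_closure h)) f).symm

theorem frontier_biUnion_Ioo_subset {α ι : Type*} [TopologicalSpace α] [LinearOrder α]
    [OrderTopology α] (S : Finset ι) (a b : ι → α) :
    frontier (⋃ i ∈ S, Ioo (a i) (b i)) ⊆ ⋃ i ∈ S, {a i, b i} := by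
  have hopen : IsOpen (⋃ i ∈ S, Ioo (a i) (b i)) := isOpen_biUnion fun i _ => isOpen_Ioo
  rw [hopen.frontier_eq, S.closure_biUnion]
  rintro t ⟨hcl, hU⟩
  obtain ⟨i, hi, ht⟩ := mem_iUnion₂.1 hcl
  have hIcc : t ∈ Icc (a i) (b i) := closure_minimal Ioo_subset_Icc_self isClosed_Icc ht
  have hIoo : t ∉ Ioo (a i) (b i) := fun h => hU (mem_iUnion₂.2 ⟨i, hi, h⟩)
  refine mem_iUnion₂.2 ⟨i, hi, ?_⟩
  by_contra hne
  simp only [mem_insert_iff, mem_singleton_iff, not_or] at hne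
  exact hIoo ⟨hIcc.1.lt_of_ne' hne.1, hIcc.2.lt_of_ne hne.2⟩

theorem stmt17_general (μ : Measure ℝ) [IsFiniteMeasure μ]
    (F : Set ℝ) (hFdense : Dense F)
    (hatoms : ∀ x : ℝ, 0 < μ {x} → x ∈ F)
    (M : ℕ → Finset ℝ) (hMmono : Monotone M)
    (hMunion : (⋃ n, (M n : Set ℝ)) = F)
    (ω : ℕ → ℝ → ENNReal)
    (hω : ∀ n, ∀ x ∈ M n,
      ω n x = if ((M n).filter (fun y => x < y)).Nonempty
        then μ (Set.Ico x (sInf {y : ℝ | y ∈ M n ∧ x < y}))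
        else μ (Set.Ici x))
    (μn : ℕ → Measure ℝ)
    (hμn : ∀ n, μn n = ∑ x ∈ M n, (ω n x) • Measure.dirac x)
    (U : Set ℝ) (S : Finset (ℝ × ℝ)) (hU : U = ⋃ p ∈ S, Set.Ioo p.1 p.2)
    (f : ℝ → ℝ) (B : ℝ) (hBdd : ∀ x : ℝ, |f x| ≤ B)
    (hcont : ∀ x : ℝ, x ∈ U → x ∉ F → ContinuousAt f x) :
    Filter.Tendsto (fun n => ∫ x in U, f x ∂(μn n)) Filter.atTop
      (nhds (∫ x in U, f x ∂μ)) := by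
  have hUopen : IsOpen U := hU ▸ isOpen_biUnion fun p _ => isOpen_Ioo
  have hμn_cell : ∀ n, μn n = ∑ x ∈ M n, μ (stepCell (M n) x) • Measure.dirac x := by
    intro n
    rw [hμn n]
    exact Finset.sum_congr rfl fun x hx => by rw [hω n x hx, stepCell_eq_ite, apply_ite μ]
  simp only [← integral_indicator hUopen.measurableSet, hμn_cell,
    integral_sum_dirac_eq_integral_stepApprox]
  have hB : ∀ x, ‖U.indicator f x‖ ≤ B := fun x =>
    (norm_indicator_le_norm_self f x).trans (hBdd x)
  refine tendsto_integral_of_dominated_convergence (fun _ => B)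
    (fun n => (stronglyMeasurable_stepApprox _ _).aestronglyMeasurable) (integrable_const B)
    (fun n => .of_forall (norm_stepApprox_le hB ((abs_nonneg _).trans (hBdd 0)) _)) ?_
  have hnull : μ (frontier U \ F) = 0 := by
    have hfin : (frontier U).Finite :=
      (S.finite_toSet.biUnion fun p _ => toFinite {p.1, p.2}).subset
        (hU ▸ frontier_biUnion_Ioo_subset S Prod.fst Prod.snd)
    refine (measure_null_iff_singleton hfin.sdiff.countable).2 fun x hx => ?_
    by_contra hx0
    exact hx.2 (hatoms x (pos_iff_ne_zero.2 hx0))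
  filter_upwards [measure_eq_zero_iff_ae_notMem.1 hnull] with t ht
  by_cases htF : t ∈ F
  · obtain ⟨N, hN⟩ := mem_iUnion.1 (hMunion ▸ htF)
    exact tendsto_stepApprox_of_mem hMmono hN
  · exact tendsto_stepApprox_of_continuousAt hMmono (hMunion ▸ hFdense)
      (continuousAt_indicator_of_notMem_frontier (fun h => ht ⟨h, htF⟩) (hcont t · htF))

/-- Approximation lemma: with `μₙ = Σ_{x∈Mₙ} ωₙ(x) δₓ`, where `ωₙ(x) = μ[x,x')` (`x'` the
successor of `x` in `Mₙ`) and `ωₙ(max Mₙ) = μ[max Mₙ,∞)`, one has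
`∫_U f dμₙ → ∫_U f dμ` for any finite union `U` of open intervals and any bounded `f`
whose discontinuities lie in `F ∪ (ℝ∖U)`. -/
theorem stmt17 (μ : Measure ℝ) [IsFiniteMeasure μ]
    (F : Set ℝ) (hFdense : Dense F) (hFcount : F.Countable)
    (hatoms : ∀ x : ℝ, 0 < μ {x} → x ∈ F)
    (M : ℕ → Finset ℝ) (hMmono : Monotone M)
    (hMF : ∀ n, (M n : Set ℝ) ⊆ F) (hMunion : (⋃ n, (M n : Set ℝ)) = F)
    (ω : ℕ → ℝ → ENNReal)
    (hω : ∀ n, ∀ x ∈ M n,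
      ω n x = if ((M n).filter (fun y => x < y)).Nonempty
        then μ (Set.Ico x (sInf {y : ℝ | y ∈ M n ∧ x < y}))
        else μ (Set.Ici x))
    (μn : ℕ → Measure ℝ)
    (hμn : ∀ n, μn n = ∑ x ∈ M n, (ω n x) • Measure.dirac x)
    (U : Set ℝ) (S : Finset (ℝ × ℝ)) (hU : U = ⋃ p ∈ S, Set.Ioo p.1 p.2)
    (f : ℝ → ℝ) (B : ℝ) (hBdd : ∀ x : ℝ, |f x| ≤ B)
    (hcont : ∀ x : ℝ, x ∈ U → x ∉ F → ContinuousAt f x) :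
    Filter.Tendsto (fun n => ∫ x in U, f x ∂(μn n)) Filter.atTop
      (nhds (∫ x in U, f x ∂μ)) :=
  stmt17_general μ F hFdense hatoms M hMmono hMunion ω hω μn hμn U S hU f B hBdd hcont
end
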